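/- arXiv:math/0406134 — 3 statements merged into one kernel-verified Lean document; each statement's English description precedes it below -/
import Mathlib

section
/- Let F be a real 2-uniform (n,k)-frame such that for some m ≥ 3 the associated graph G_F has no induced complete bipartite subgraph on m vertices. Then e_m^∞(F) ≤ k/n + c_{n,k}·(m/2 − 2 + √(m²/4 + m − 3)). Moreover, if G_F contains an induced subgraph on m vertices that differs from a complete bipartite graph by one edge (i.e., whose switching class has minimum edge number 1), then equality holds. -/
open Matrix
open scoped Classical

noncomputable section

namespace FramesErasures

/-- The constant `c_{n,k} = sqrt(k(n-k)/(n^2(n-1)))`. -/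
noncomputable def c (n k : ℕ) : ℝ :=
  Real.sqrt ((k : ℝ) * ((n : ℝ) - k) / ((n : ℝ) ^ 2 * ((n : ℝ) - 1)))

/-- Operator norm (ℓ²→ℓ²) of a square real matrix. -/
noncomputable def opNorm {k : ℕ} (A : Matrix (Fin k) (Fin k) ℝ) : ℝ :=
  ‖Matrix.toEuclideanCLM (𝕜 := ℝ) A‖

/-- The diagonal 0-1 matrix with 1's exactly at the positions in `S`. -/
def diagS {n : ℕ} (S : Finset (Fin n)) : Matrix (Fin n) (Fin n) ℝ :=
  Matrix.diagonal fun i => if i ∈ S then 1 else 0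

/-- `e_m^∞(F)`: the maximal norm of an error operator for `m` erasures. -/
noncomputable def errInf {n k : ℕ} (V : Matrix (Fin n) (Fin k) ℝ) (m : ℕ) : ℝ :=
  sSup {x : ℝ | ∃ S : Finset (Fin n), S.card = m ∧ x = opNorm (Vᵀ * diagS S * V)}

/-- `e_m^p(F)`: the ℓᵖ-average of the norms of the error operators for `m` erasures. -/
noncomputable def errP {n k : ℕ} (V : Matrix (Fin n) (Fin k) ℝ) (m : ℕ) (p : ℝ) : ℝ :=
  ((n.choose m : ℝ)⁻¹ *
      ∑ S ∈ Finset.univ.filter fun S : Finset (Fin n) => S.card = m,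
        opNorm (Vᵀ * diagS S * V) ^ p) ^ (1 / p)

/-- A Parseval frame is uniform if all diagonal Grammian entries equal `k/n`. -/
def Uniform (n k : ℕ) (V : Matrix (Fin n) (Fin k) ℝ) : Prop :=
  ∀ j, (V * Vᵀ) j j = (k : ℝ) / n

/-- 2-uniformity, via the equiangularity characterization. -/
def TwoUniform (n k : ℕ) (V : Matrix (Fin n) (Fin k) ℝ) : Prop :=
  Uniform n k V ∧ ∀ i j, i ≠ j → |(V * Vᵀ) i j| = c n k

/-- The `n×n` all-ones matrix. -/
def Jmat (n : ℕ) : Matrix (Fin n) (Fin n) ℝ :=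
  Matrix.of fun _ _ => 1

/-- A real 2-uniform `(n,k)`-frame, given by its analysis operator and signature matrix. -/
structure TwoUniformFrame (n k : ℕ) where
  V : Matrix (Fin n) (Fin k) ℝ
  Q : Matrix (Fin n) (Fin n) ℝ
  parseval : Vᵀ * V = 1
  symm : Qᵀ = Q
  diag : ∀ i, Q i i = 0
  offdiag : ∀ i j, i ≠ j → Q i j = 1 ∨ Q i j = -1
  gram : V * Vᵀ = ((k : ℝ) / n) • (1 : Matrix (Fin n) (Fin n) ℝ) + c n k • Q

/-- The graph associated with a 2-uniform frame: `i ≠ j` adjacent iff `Q i j = -1`. -/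
def frameGraph {n k : ℕ} (F : TwoUniformFrame n k) : SimpleGraph (Fin n) where
  Adj i j := i ≠ j ∧ F.Q i j = -1
  symm := by
    constructor
    intro i j h
    refine ⟨h.1.symm, ?_⟩
    have h2 : F.Q i j = F.Q j i := by
      have := congrFun (congrFun F.symm j) i
      simpa [Matrix.transpose_apply] using this
    rw [← h2]
    exact h.2
  loopless := ⟨fun i h => h.1 rfl⟩

/-- A graph is complete bipartite (with one part possibly empty). -/
def IsCompleteBipartite {α : Type*} (G : SimpleGraph α) : Prop :=
  ∃ A : Set α, ∀ i j, G.Adj i j ↔ ((i ∈ A) ↔ (j ∉ A))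

/-- `G` has an induced complete bipartite subgraph on `m` vertices. -/
def HasInducedCompleteBipartite {n : ℕ} (G : SimpleGraph (Fin n)) (m : ℕ) : Prop :=
  ∃ S : Finset (Fin n), S.card = m ∧
    IsCompleteBipartite (G.induce (S : Set (Fin n)))

/-- The Seidel adjacency matrix of a graph. -/
noncomputable def seidel {α : Type*} [DecidableEq α] (G : SimpleGraph α) : Matrix α α ℝ :=
  Matrix.of fun i j => if i = j then 0 else if G.Adj i j then -1 else 1

/-- Switching equivalence of graphs: Seidel matrices conjugate by a product of a permutation
and a `±1` diagonal matrix. -/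
def SwitchingEquivalent {α : Type*} [DecidableEq α] (G H : SimpleGraph α) : Prop :=
  ∃ (σ : Equiv.Perm α) (ε : α → ℝ), (∀ i, ε i = 1 ∨ ε i = -1) ∧
    ∀ i j, seidel H i j = ε i * ε j * seidel G (σ i) (σ j)

/-- `G ∈ 𝒢_m^(s)`: the minimal number of edges in the switching class of `G` equals `s`. -/
def MinSwitchEdges {α : Type*} [DecidableEq α] (G : SimpleGraph α) (s : ℕ) : Prop :=
  IsLeast {t : ℕ | ∃ H : SimpleGraph α, SwitchingEquivalent G H ∧ H.edgeSet.ncard = t} s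

/-- `lam` is the largest eigenvalue of the real matrix `A`. -/
def IsMaxEigenvalue {m : ℕ} (A : Matrix (Fin m) (Fin m) ℝ) (lam : ℝ) : Prop :=
  (∃ v : Fin m → ℝ, v ≠ 0 ∧ A.mulVec v = lam • v) ∧
  ∀ μ : ℝ, (∃ v : Fin m → ℝ, v ≠ 0 ∧ A.mulVec v = μ • v) → μ ≤ lam

/-- A 2-uniform frame is 3-uniform if the error norm is the same for all triple erasures. -/
def ThreeUniform {n k : ℕ} (F : TwoUniformFrame n k) : Prop :=
  ∀ S T : Finset (Fin n), S.card = 3 → T.card = 3 →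
    opNorm (F.Vᵀ * diagS S * F.V) = opNorm (F.Vᵀ * diagS T * F.V)

/-!
For `|S| = m` the error operator is `Vᵀ D_S V = B Bᵀ`, where `B` consists of the columns of `Vᵀ`
indexed by `S`; its norm is `‖B‖²`, the largest eigenvalue of `Bᵀ B = (k/n) I + c Q_S`, and `Q_S` is
the Seidel matrix of the induced graph `G_F[S]`.

Let `Q_S v = λ v` with `λ ≥ 0`. Switching by the signs of `v` makes the eigenvector `|v| ≥ 0`.
If `G_F[S]` is not complete bipartite, the switched graph keeps an edge `pq`; the eigen-equations
at `p` and `q`, together with their sum over all vertices, give `(λ + 3)(m - 1 - λ) ≥ 4`, that is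
`λ ≤ m/2 - 2 + √(m²/4 + m - 3)`. This value is an eigenvalue of the one-edge graph on `m` vertices,
with eigenvector `λ + 1` at the ends of the edge and `λ + 3` elsewhere, and switching preserves
eigenvalues; this gives equality.
-/

/-- The largest root of `(x + 3) * (m - 1 - x) = 4`. -/
def seidelBound (m : ℝ) : ℝ := m / 2 - 2 + Real.sqrt (m ^ 2 / 4 + m - 3)

lemma one_le_seidelBound {m : ℝ} (hm : 3 ≤ m) : 1 ≤ seidelBound m := by
  have : 3 / 2 ≤ Real.sqrt (m ^ 2 / 4 + m - 3) :=
    Real.le_sqrt_of_sq_le (by nlinarith)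
  unfold seidelBound; linarith

lemma seidelBound_sq {m : ℝ} (hm : 3 ≤ m) :
    seidelBound m ^ 2 = (m - 4) * seidelBound m + 3 * m - 7 := by
  have := Real.sq_sqrt (show 0 ≤ m ^ 2 / 4 + m - 3 by nlinarith)
  unfold seidelBound; nlinarith

lemma le_seidelBound_of_four_le {m x : ℝ} (hm : 3 ≤ m) (h : 4 ≤ (x + 3) * (m - 1 - x)) :
    x ≤ seidelBound m := by
  have hsq := seidelBound_sq hm
  have : m - 4 ≤ 2 * seidelBound m := by
    have := Real.sqrt_nonneg (m ^ 2 / 4 + m - 3)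
    unfold seidelBound; linarith
  nlinarith

open scoped MatrixOrder in
lemma dotProduct_mulVec_le_of_eigenvalue_le {ι : Type*} [Fintype ι] [DecidableEq ι]
    {A : Matrix ι ι ℝ} (hA : A.IsHermitian) {B : ℝ}
    (hB : ∀ μ (v : ι → ℝ), v ≠ 0 → A *ᵥ v = μ • v → μ ≤ B) (v : ι → ℝ) :
    v ⬝ᵥ A *ᵥ v ≤ B * (v ⬝ᵥ v) := by
  have hle : A ≤ algebraMap ℝ _ B := by
    refine le_algebraMap_of_spectrum_le (fun μ hμ => ?_) hA.isSelfAdjoint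
    obtain ⟨i, rfl⟩ := hA.spectrum_real_eq_range_eigenvalues ▸ hμ
    exact hB _ _ (by simpa using hA.eigenvectorBasis.orthonormal.ne_zero i)
      (hA.mulVec_eigenvectorBasis i)
  have := (Matrix.le_iff.mp hle).dotProduct_mulVec_nonneg v
  simp only [star_trivial, Algebra.algebraMap_eq_smul_one, sub_mulVec, smul_mulVec, one_mulVec,
    dotProduct_sub, dotProduct_smul, smul_eq_mul, sub_nonneg] at this
  exact this

lemma four_le_of_nonneg_eigenvector {ι : Type*} [Fintype ι] [DecidableEq ι] {M : Matrix ι ι ℝ}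
    (hdiag : ∀ i, M i i = 0) (hle : ∀ i j, M i j ≤ 1) {p q : ι} (hpq : p ≠ q)
    (hpq' : M p q = -1) (hqp' : M q p = -1) {w : ι → ℝ} (hw : 0 ≤ w) (hs : 0 < ∑ i, w i)
    {μ : ℝ} (hμ : -1 ≤ μ) (h : M *ᵥ w = μ • w) :
    4 ≤ (μ + 3) * (Fintype.card ι - 1 - μ) := by
  set s := ∑ i, w i
  -- for a Seidel matrix `M`, `s - (μ + 1) * w i` is twice the `w`-weight of the neighbours of `i`
  have hdeg : ∀ i, s - (μ + 1) * w i = ∑ j, (1 - M i j - (1 : Matrix ι ι ℝ) i j) * w j := by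
    intro i
    have := congrFun h i
    simp only [mulVec, dotProduct, Pi.smul_apply, smul_eq_mul] at this
    simp only [one_apply, sub_mul, one_mul, ite_mul, zero_mul, Finset.sum_sub_distrib, this,
      Finset.sum_ite_eq, Finset.mem_univ, ↓reduceIte, s]
    ring
  have hcoef : ∀ i j, 0 ≤ (1 - M i j - (1 : Matrix ι ι ℝ) i j) * w j := by
    intro i j
    refine mul_nonneg ?_ (hw j)
    rcases eq_or_ne i j with rfl | hij
    · simp [hdiag]
    · simpa [one_apply_ne hij] using hle i j
  have hnonneg : ∀ i, 0 ≤ s - (μ + 1) * w i := fun i =>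
    (hdeg i).symm ▸ Finset.sum_nonneg fun j _ => hcoef i j
  have hp : 2 * w q ≤ s - (μ + 1) * w p := by
    rw [hdeg]
    calc 2 * w q = (1 - M p q - (1 : Matrix ι ι ℝ) p q) * w q := by
          rw [hpq', one_apply_ne hpq]; ring
      _ ≤ _ := Finset.single_le_sum (fun j _ => hcoef p j) (Finset.mem_univ q)
  have hq : 2 * w p ≤ s - (μ + 1) * w q := by
    rw [hdeg]
    calc 2 * w p = (1 - M q p - (1 : Matrix ι ι ℝ) q p) * w p := by
          rw [hqp', one_apply_ne hpq.symm]; ring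
      _ ≤ _ := Finset.single_le_sum (fun j _ => hcoef q j) (Finset.mem_univ p)
  have htotal : ∑ i, (s - (μ + 1) * w i) = (Fintype.card ι - 1 - μ) * s := by
    simp only [Finset.sum_sub_distrib, Finset.sum_const, Finset.card_univ, nsmul_eq_mul,
      ← Finset.mul_sum, s]
    ring
  have hpair : (s - (μ + 1) * w p) + (s - (μ + 1) * w q) ≤ (Fintype.card ι - 1 - μ) * s := by
    rw [← htotal, ← Finset.sum_pair hpq (f := fun i => s - (μ + 1) * w i)]
    exact Finset.sum_le_sum_of_subset_of_nonneg (Finset.subset_univ _) fun i _ _ => hnonneg i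
  have : 4 * s ≤ (μ + 3) * (Fintype.card ι - 1 - μ) * s := by
    nlinarith [mul_le_mul_of_nonneg_left hpair (show 0 ≤ μ + 3 by linarith),
      mul_le_mul_of_nonneg_left (add_le_add hp hq) (show 0 ≤ μ + 1 by linarith)]
  exact le_of_mul_le_mul_right this hs

lemma isHermitian_seidel {α : Type*} [DecidableEq α] (G : SimpleGraph α) :
    (seidel G).IsHermitian :=
  isHermitian_iff_isSymm.mpr <| IsSymm.ext fun i j => by simp [seidel, eq_comm, G.adj_comm]

lemma eigenvalue_seidel_le_seidelBound {α : Type*} [Fintype α] [DecidableEq α]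
    {G : SimpleGraph α} (hcard : 3 ≤ Fintype.card α) (hG : ¬ IsCompleteBipartite G)
    {μ : ℝ} {v : α → ℝ} (hv : v ≠ 0) (h : seidel G *ᵥ v = μ • v) :
    μ ≤ seidelBound (Fintype.card α) := by
  have hm : (3 : ℝ) ≤ Fintype.card α := by exact_mod_cast hcard
  rcases lt_or_ge μ 0 with hμ | hμ
  · linarith [one_le_seidelBound hm]
  -- switching by the signs of `v` turns the eigenvector into `|v|`
  set ε : α → ℝ := fun i => if v i < 0 then -1 else 1
  have hεε : diagonal ε * diagonal ε = 1 := by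
    rw [diagonal_mul_diagonal, ← diagonal_one]
    congr 1; ext i; simp only [ε]; split_ifs <;> norm_num
  have hεv : diagonal ε *ᵥ v = fun i => |v i| := by
    ext i; simp only [mulVec_diagonal, ε]; split_ifs with h
    · rw [abs_of_neg h]; ring
    · rw [abs_of_nonneg (not_lt.mp h)]; ring
  set M := diagonal ε * seidel G * diagonal ε
  have hM : ∀ i j, M i j = ε i * ε j * seidel G i j := by
    intro i j; simp only [M, mul_diagonal, diagonal_mul]; ring
  have heig : M *ᵥ (fun i => |v i|) = μ • fun i => |v i| := by
    rw [← hεv, mulVec_mulVec, Matrix.mul_assoc, hεε, Matrix.mul_one, ← mulVec_mulVec, h,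
      mulVec_smul]
  obtain ⟨p, hnot⟩ := not_forall.mp (not_exists.mp hG {i | v i < 0})
  obtain ⟨q, hpq⟩ := not_forall.mp hnot
  have hne : p ≠ q := by rintro rfl; by_cases hp : v p < 0 <;> simp [hp] at hpq
  have hMpq : M p q = -1 := by
    rw [hM]; simp only [ε, seidel, of_apply, if_neg hne]
    by_cases hp : v p < 0 <;> by_cases hq : v q < 0 <;> by_cases hadj : G.Adj p q <;>
      simp [hp, hq, hadj] at hpq ⊢
  refine le_seidelBound_of_four_le hm (four_le_of_nonneg_eigenvector (M := M) ?_ ?_ hne hMpq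
    ?_ (fun i => abs_nonneg (v i)) ?_ (by linarith) heig)
  · intro i; simp [hM, seidel]
  · intro i j; rw [hM]; simp only [ε, seidel, of_apply]; split_ifs <;> norm_num
  · rwa [hM, mul_comm (ε q), ← (isHermitian_seidel G).apply q p, star_trivial, ← hM]
  · obtain ⟨i, hi⟩ := Function.ne_iff.mp hv
    exact lt_of_lt_of_le (abs_pos.mpr hi)
      (Finset.single_le_sum (fun j _ => abs_nonneg (v j)) (Finset.mem_univ i))

lemma SwitchingEquivalent.exists_eigenvector {α : Type*} [Fintype α] [DecidableEq α]
    {G H : SimpleGraph α} (hGH : SwitchingEquivalent G H) {μ : ℝ} {w : α → ℝ} (hw : w ≠ 0)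
    (h : seidel H *ᵥ w = μ • w) : ∃ u, u ≠ 0 ∧ seidel G *ᵥ u = μ • u := by
  obtain ⟨σ, ε, hε, hrel⟩ := hGH
  have hεε : diagonal ε * diagonal ε = 1 := by
    rw [diagonal_mul_diagonal, ← diagonal_one]
    congr 1; ext i; rcases hε i with h | h <;> simp [h]
  have hH : seidel H = diagonal ε * (seidel G).submatrix σ σ * diagonal ε := by
    ext i j; simp only [hrel, mul_diagonal, diagonal_mul, submatrix_apply]; ring
  refine ⟨(diagonal ε *ᵥ w) ∘ σ.symm, ?_, ?_⟩
  · intro h0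
    apply hw
    have : diagonal ε *ᵥ w = 0 := by
      ext i; simpa using congrFun h0 (σ i)
    rw [← one_mulVec w, ← hεε, ← mulVec_mulVec, this, mulVec_zero]
  · have : (seidel G).submatrix σ σ *ᵥ (diagonal ε *ᵥ w) = μ • (diagonal ε *ᵥ w) := by
      calc _ = diagonal ε *ᵥ (diagonal ε *ᵥ ((seidel G).submatrix σ σ *ᵥ (diagonal ε *ᵥ w))) := by
            simp only [mulVec_mulVec, ← Matrix.mul_assoc, hεε, Matrix.one_mul]
        _ = diagonal ε *ᵥ (seidel H *ᵥ w) := by simp only [hH, mulVec_mulVec, Matrix.mul_assoc]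
        _ = _ := by rw [h, mulVec_smul]
    rw [submatrix_mulVec_equiv] at this
    ext x
    simpa using congrFun this (σ.symm x)

lemma seidel_mulVec_apply {α : Type*} [Fintype α] [DecidableEq α] (G : SimpleGraph α)
    [DecidableRel G.Adj] (w : α → ℝ) (i : α) :
    (seidel G *ᵥ w) i = ∑ j, w j - w i - 2 * ∑ j, if G.Adj i j then w j else 0 := by
  have hterm : ∀ j, seidel G i j * w j
      = w j - (if i = j then w j else 0) - 2 * (if G.Adj i j then w j else 0) := by
    intro j
    rcases eq_or_ne i j with rfl | hij
    · simp [seidel]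
    · by_cases hadj : G.Adj i j <;> simp only [seidel, of_apply, hij, hadj, ↓reduceIte] <;> ring
  simp only [mulVec, dotProduct, hterm, Finset.sum_sub_distrib, Finset.sum_ite_eq,
    Finset.mem_univ, if_true, Finset.mul_sum]

lemma seidel_mulVec_of_edgeSet_eq_singleton {α : Type*} [Fintype α] [DecidableEq α]
    {H : SimpleGraph α} {p q : α} (hH : H.edgeSet = {s(p, q)}) {B : ℝ}
    (hB : B ^ 2 = (Fintype.card α - 4) * B + 3 * Fintype.card α - 7) :
    seidel H *ᵥ (fun i => if i = p ∨ i = q then B + 1 else B + 3)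
      = B • fun i => if i = p ∨ i = q then B + 1 else B + 3 := by
  classical
  have hadj : ∀ i j, H.Adj i j ↔ i = p ∧ j = q ∨ i = q ∧ j = p := by
    intro i j; rw [← SimpleGraph.mem_edgeSet, hH, Set.mem_singleton_iff, Sym2.eq_iff]
  have hpq : p ≠ q := H.ne_of_adj ((hadj p q).mpr (Or.inl ⟨rfl, rfl⟩))
  set w : α → ℝ := fun i => if i = p ∨ i = q then B + 1 else B + 3
  have hw : ∀ j, w j = B + 3 - (if j = p then 2 else 0) - (if j = q then 2 else 0) := by
    intro j; simp only [w]; split_ifs <;> simp_all <;> ring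
  have hsum : ∑ j, w j = Fintype.card α * (B + 3) - 4 := by
    simp only [hw, Finset.sum_sub_distrib, Finset.sum_const, Finset.sum_ite_eq',
      Finset.mem_univ, if_true, Finset.card_univ, nsmul_eq_mul]
    ring
  ext i
  rw [seidel_mulVec_apply, hsum, Pi.smul_apply, smul_eq_mul]
  by_cases hip : i = p
  · subst hip
    simp only [hpq, or_false, ↓reduceIte, hadj, true_and, false_and, Finset.sum_ite_eq',
      Finset.mem_univ, or_true, w]
    linear_combination -hB
  by_cases hiq : i = q
  · subst hiq
    simp only [hpq.symm, or_true, ↓reduceIte, hadj, false_and, true_and, false_or,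
      Finset.sum_ite_eq', Finset.mem_univ, hpq, or_false, w]
    linear_combination -hB
  · simp only [hip, hiq, or_self, ↓reduceIte, hadj, false_and, Finset.sum_const_zero, mul_zero,
      sub_zero, w]
    linear_combination -hB

lemma EuclideanSpace.norm_sq_eq_dotProduct {ι : Type*} [Fintype ι] (x : EuclideanSpace ℝ ι) :
    ‖x‖ ^ 2 = x.ofLp ⬝ᵥ x.ofLp := by
  rw [EuclideanSpace.real_norm_sq_eq]
  simp [dotProduct, sq]

section L2OperatorNorm

open scoped Matrix.Norms.L2Operator

variable {k : ℕ} {ι : Type*} [Fintype ι]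

lemma opNorm_mul_transpose_self [DecidableEq ι] (B : Matrix (Fin k) ι ℝ) :
    opNorm (B * Bᵀ) = ‖B‖ ^ 2 := by
  have h := l2_opNorm_conjTranspose_mul_self Bᵀ
  have hB : ‖Bᵀ‖ = ‖B‖ := by
    simpa [conjTranspose_eq_transpose_of_trivial] using l2_opNorm_conjTranspose B
  rw [conjTranspose_eq_transpose_of_trivial, transpose_transpose, hB] at h
  rw [opNorm, l2_opNorm_toEuclideanCLM, h, sq]

lemma norm_toLp_mulVec_sq (B : Matrix (Fin k) ι ℝ) (u : ι → ℝ) :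
    ‖WithLp.toLp 2 (B *ᵥ u)‖ ^ 2 = u ⬝ᵥ (Bᵀ * B) *ᵥ u := by
  rw [EuclideanSpace.norm_sq_eq_dotProduct, WithLp.ofLp_toLp, ← mulVec_mulVec, dotProduct_mulVec u,
    vecMul_transpose]

lemma sq_l2_opNorm_le {B : Matrix (Fin k) ι ℝ} {μ : ℝ} (hμ : 0 ≤ μ)
    (h : ∀ u, u ⬝ᵥ (Bᵀ * B) *ᵥ u ≤ μ * (u ⬝ᵥ u)) : ‖B‖ ^ 2 ≤ μ := by
  suffices ‖B‖ ≤ √μ by simpa [Real.sq_sqrt hμ] using pow_le_pow_left₀ (norm_nonneg B) this 2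
  refine ContinuousLinearMap.opNorm_le_bound _ (Real.sqrt_nonneg μ) fun x => ?_
  change ‖WithLp.toLp 2 (B *ᵥ x.ofLp)‖ ≤ _
  rw [← Real.sqrt_sq (norm_nonneg x), ← Real.sqrt_mul hμ]
  refine Real.le_sqrt_of_sq_le ?_
  rw [norm_toLp_mulVec_sq, EuclideanSpace.norm_sq_eq_dotProduct]
  exact h _

lemma le_sq_l2_opNorm {B : Matrix (Fin k) ι ℝ} {μ : ℝ} {u : ι → ℝ} (hu : u ≠ 0)
    (h : (Bᵀ * B) *ᵥ u = μ • u) : μ ≤ ‖B‖ ^ 2 := by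
  have hle : ‖WithLp.toLp 2 (B *ᵥ u)‖ ^ 2 ≤ ‖B‖ ^ 2 * ‖WithLp.toLp 2 u‖ ^ 2 := by
    rw [← mul_pow]
    exact pow_le_pow_left₀ (norm_nonneg _) (by simpa using l2_opNorm_mulVec B (WithLp.toLp 2 u)) 2
  have hpos : 0 < ‖WithLp.toLp 2 u‖ ^ 2 := pow_pos (norm_pos_iff.mpr (by simpa using hu)) 2
  rw [norm_toLp_mulVec_sq, h, dotProduct_smul, smul_eq_mul,
    ← EuclideanSpace.norm_sq_eq_dotProduct (WithLp.toLp 2 u)] at hle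
  exact le_of_mul_le_mul_right hle hpos

end L2OperatorNorm

lemma transpose_mul_diagS_mul {n k : ℕ} (V : Matrix (Fin n) (Fin k) ℝ) (S : Finset (Fin n)) :
    Vᵀ * diagS S * V
      = Vᵀ.submatrix id ((↑) : ↥(S : Set (Fin n)) → Fin n)
        * (Vᵀ.submatrix id ((↑) : ↥(S : Set (Fin n)) → Fin n))ᵀ := by
  ext a b
  rw [mul_apply]
  simp only [diagS, mul_diagonal, transpose_apply, mul_ite, ite_mul, mul_one, mul_zero, zero_mul]
  rw [← Finset.sum_filter, Finset.filter_mem_eq_inter, Finset.univ_inter, ← Finset.sum_coe_sort]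
  rfl

lemma submatrix_transpose_mul_self {n k : ℕ} (V : Matrix (Fin n) (Fin k) ℝ) (s : Set (Fin n))
    [Fintype s] :
    (Vᵀ.submatrix id ((↑) : s → Fin n))ᵀ * Vᵀ.submatrix id ((↑) : s → Fin n)
      = (V * Vᵀ).submatrix (↑) (↑) := by
  rw [transpose_submatrix, transpose_transpose, submatrix_mul _ _ _ id _ Function.bijective_id]

lemma seidel_induce_frameGraph {n k : ℕ} (F : TwoUniformFrame n k) (s : Set (Fin n)) :
    seidel ((frameGraph F).induce s) = F.Q.submatrix (↑) (↑) := by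
  ext i j
  rcases eq_or_ne i j with rfl | hij
  · simp [seidel, F.diag]
  · have hij' : (i : Fin n) ≠ j := Subtype.coe_injective.ne hij
    rcases F.offdiag i j hij' with h | h <;>
      simp [seidel, frameGraph, hij, hij', h, show (1 : ℝ) ≠ -1 by norm_num]

lemma TwoUniformFrame.submatrix_gram {n k : ℕ} (F : TwoUniformFrame n k) (s : Set (Fin n))
    [Fintype s] :
    (F.Vᵀ.submatrix id ((↑) : s → Fin n))ᵀ * F.Vᵀ.submatrix id ((↑) : s → Fin n)
      = ((k : ℝ) / n) • 1 + c n k • seidel ((frameGraph F).induce s) := by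
  rw [submatrix_transpose_mul_self, F.gram, seidel_induce_frameGraph]
  ext i j
  simp [one_apply, Subtype.ext_iff]

lemma c_nonneg (n k : ℕ) : 0 ≤ c n k := Real.sqrt_nonneg _

lemma div_add_c_mul_seidelBound_nonneg {n k m : ℕ} (hm : 3 ≤ m) :
    0 ≤ (k : ℝ) / n + c n k * seidelBound m :=
  add_nonneg (by positivity) (mul_nonneg (c_nonneg n k)
    (zero_le_one.trans (one_le_seidelBound (by exact_mod_cast hm))))

section ErasureOperator

open scoped Matrix.Norms.L2Operator

variable {n k m : ℕ} (F : TwoUniformFrame n k) {S : Finset (Fin n)}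

lemma opNorm_transpose_mul_diagS_mul_le (hm : 3 ≤ m) (hS : S.card = m)
    (hG : ¬ IsCompleteBipartite ((frameGraph F).induce (S : Set (Fin n)))) :
    opNorm (F.Vᵀ * diagS S * F.V) ≤ (k : ℝ) / n + c n k * seidelBound m := by
  have hcard : Fintype.card (S : Set (Fin n)) = m := by simpa using hS
  rw [transpose_mul_diagS_mul, opNorm_mul_transpose_self]
  refine sq_l2_opNorm_le (div_add_c_mul_seidelBound_nonneg hm) fun u => ?_
  have hQ := dotProduct_mulVec_le_of_eigenvalue_le (isHermitian_seidel _)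
    (fun μ v hv h => hcard ▸ eigenvalue_seidel_le_seidelBound (hcard ▸ hm) hG hv h) u
  rw [F.submatrix_gram, add_mulVec, smul_mulVec, smul_mulVec, one_mulVec, dotProduct_add,
    dotProduct_smul, dotProduct_smul, smul_eq_mul, smul_eq_mul]
  nlinarith [mul_le_mul_of_nonneg_left hQ (c_nonneg n k)]

lemma le_opNorm_transpose_mul_diagS_mul (hm : 3 ≤ m) (hS : S.card = m)
    (hG : MinSwitchEdges ((frameGraph F).induce (S : Set (Fin n))) 1) :
    (k : ℝ) / n + c n k * seidelBound m ≤ opNorm (F.Vᵀ * diagS S * F.V) := by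
  have hcard : Fintype.card (S : Set (Fin n)) = m := by simpa using hS
  have hm' : (3 : ℝ) ≤ m := by exact_mod_cast hm
  obtain ⟨H, hGH, hH⟩ := hG.1
  obtain ⟨e, he⟩ := Set.ncard_eq_one.mp hH
  induction e using Sym2.ind with
  | _ p q =>
  have hw := seidel_mulVec_of_edgeSet_eq_singleton he (B := seidelBound m)
    (by rw [hcard]; exact seidelBound_sq hm')
  have hw0 : (fun i => if i = p ∨ i = q then seidelBound m + 1 else seidelBound m + 3) ≠ 0 :=
    Function.ne_iff.mpr ⟨p, by
      simp only [true_or, ↓reduceIte, Pi.zero_apply, ne_eq]; linarith [one_le_seidelBound hm']⟩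
  obtain ⟨u, hu, hGu⟩ := hGH.exists_eigenvector hw0 hw
  rw [transpose_mul_diagS_mul, opNorm_mul_transpose_self]
  refine le_sq_l2_opNorm hu ?_
  rw [F.submatrix_gram, add_mulVec, smul_mulVec, smul_mulVec, one_mulVec, hGu, smul_smul,
    ← add_smul]

end ErasureOperator

theorem statement10_general (n k m : ℕ) (hm : 3 ≤ m)
    (F : TwoUniformFrame n k)
    (hno : ¬ HasInducedCompleteBipartite (frameGraph F) m) :
    errInf F.V m ≤
      (k : ℝ) / n + c n k * ((m : ℝ) / 2 - 2 + Real.sqrt ((m : ℝ) ^ 2 / 4 + (m : ℝ) - 3)) ∧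
    ((∃ S : Finset (Fin n), S.card = m ∧
        MinSwitchEdges ((frameGraph F).induce (S : Set (Fin n))) 1) →
      errInf F.V m =
        (k : ℝ) / n + c n k * ((m : ℝ) / 2 - 2 + Real.sqrt ((m : ℝ) ^ 2 / 4 + (m : ℝ) - 3))) := by
  have hbound : ∀ x ∈ {x | ∃ S : Finset (Fin n), S.card = m ∧ x = opNorm (F.Vᵀ * diagS S * F.V)},
      x ≤ (k : ℝ) / n + c n k * seidelBound m := by
    rintro _ ⟨S, hS, rfl⟩
    exact opNorm_transpose_mul_diagS_mul_le F hm hS fun h => hno ⟨S, hS, h⟩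
  have hle : errInf F.V m ≤ (k : ℝ) / n + c n k * seidelBound m :=
    Real.sSup_le hbound (div_add_c_mul_seidelBound_nonneg hm)
  refine ⟨hle, fun ⟨S, hS, hG⟩ => hle.antisymm ?_⟩
  exact (le_opNorm_transpose_mul_diagS_mul F hm hS hG).trans
    (le_csSup ⟨_, hbound⟩ ⟨S, hS, rfl⟩)

theorem statement10 (n k m : ℕ) (hm : 3 ≤ m) (hmn : m ≤ n)
    (F : TwoUniformFrame n k)
    (hno : ¬ HasInducedCompleteBipartite (frameGraph F) m) :
    errInf F.V m ≤
      (k : ℝ) / n + c n k * ((m : ℝ) / 2 - 2 + Real.sqrt ((m : ℝ) ^ 2 / 4 + (m : ℝ) - 3)) ∧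
    ((∃ S : Finset (Fin n), S.card = m ∧
        MinSwitchEdges ((frameGraph F).induce (S : Set (Fin n))) 1) →
      errInf F.V m =
        (k : ℝ) / n + c n k * ((m : ℝ) / 2 - 2 + Real.sqrt ((m : ℝ) ^ 2 / 4 + (m : ℝ) - 3))) :=
  statement10_general n k m hm F hno

end FramesErasures
end
end

section
/- For any two real 2-uniform (n,k)-frames F₁ and F₂, the number of 3-element vertex subsets of G_{F₁} inducing a complete bipartite subgraph equals the corresponding number for G_{F₂}; this common number E₃ depends only on n and k. Consequently, e_3^p(F₁) = e_3^p(F₂) for every 2 ≤ p < ∞, with e_3^p(F) = ( C(n,3)^{-1} [ (k/n + 2c_{n,k})^p · E₃ + (k/n + c_{n,k})^p · (C(n,3) − E₃) ] )^{1/p}. -/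
/-
For a triple `S = {i, j, l}`, `Vᵀ D_S V = Wᵀ W` where `W` consists of the rows `i, j, l` of `V`,
so its norm is that of `W Wᵀ = (k/n) I + c B`, with `B` the `3 × 3` block of `Q` on `S`. Writing
`ε = Q i j * Q i l * Q j l = ±1`, one has `B² = ε B + 2`, and `ε = 1` exactly when the induced
graph is complete bipartite. So the eigenvalues of the symmetric matrix `W Wᵀ` are `k/n + 2c`
and `k/n - c` (for `ε = 1`), or `k/n + c` and `k/n - 2c` (for `ε = -1`), and since `c ≤ 2k/n`
its norm is `k/n + 2c`, resp. `k/n + c`.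

For the count, `(V Vᵀ)² = V Vᵀ` gives `c · tr Q³ = (1 - 2k/n) n (n - 1)`, while expanding the
trace over triples gives `tr Q³ = 6 ∑_{|S| = 3} ε_S = 6 (2 E₃ - C(n,3))`. Hence `E₃` depends only
on `n` and `k`, and so does `e₃ᵖ`, which splits into the two kinds of triples.
-/

open Matrix
open scoped Classical

noncomputable section

namespace FramesErasures

open Finset
open scoped Matrix.Norms.L2Operator

open Polynomial in
theorem sub_sq_eq_of_mem_spectrum {𝕜 A : Type*} [Field 𝕜] [Ring A] [Algebra 𝕜 A] {a : A}
    {α s t z : 𝕜}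
    (h : (a - algebraMap 𝕜 A α) ^ 2 = s • (a - algebraMap 𝕜 A α) + algebraMap 𝕜 A t)
    (hz : z ∈ spectrum 𝕜 a) : (z - α) ^ 2 = s * (z - α) + t := by
  let p : 𝕜[X] := (X - C α) ^ 2 - C s * (X - C α) - C t
  have hp : aeval a p = 0 := by simp [p, h, Algebra.smul_def]
  have hmem := spectrum.subset_polynomial_aeval a p ⟨z, hz, rfl⟩
  rw [hp, spectrum.mem_iff, sub_zero] at hmem
  have hroot : eval z p = 0 := by
    by_contra hne
    exact hmem ((isUnit_iff_ne_zero.2 hne).map _)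
  simp only [p, eval_sub, eval_mul, eval_pow, eval_X, eval_C] at hroot
  linear_combination hroot

theorem mem_spectrum_of_mulVec_eq {R m : Type*} [CommRing R] [Fintype m] [DecidableEq m]
    {A : Matrix m m R} {v : m → R} {r : R} (hv : v ≠ 0) (h : A *ᵥ v = r • v) :
    r ∈ spectrum R A := by
  rw [spectrum.mem_iff]
  intro hu
  refine hv (Matrix.mulVec_injective_of_isUnit hu ?_)
  simp [Matrix.sub_mulVec, h, Algebra.algebraMap_eq_smul_one, Matrix.smul_mulVec]

theorem opNorm_eq_of_spectrum {k : ℕ} {A : Matrix (Fin k) (Fin k) ℝ} (hA : Aᵀ = A) {r : ℝ}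
    (hr : r ∈ spectrum ℝ A) (hle : ∀ z ∈ spectrum ℝ A, |z| ≤ r) : opNorm A = r := by
  set T := Matrix.toEuclideanCLM (𝕜 := ℝ) A
  have hT : IsSelfAdjoint T := by
    refine IsSelfAdjoint.map ?_ _
    simpa [IsSelfAdjoint, Matrix.star_eq_conjTranspose] using hA
  have hr0 : 0 ≤ r := (abs_nonneg r).trans (hle r hr)
  have key := ContinuousLinearMap.spectralRadius_eq_nnnorm T hT
  rw [spectralRadius, AlgEquiv.spectrum_eq Matrix.toEuclideanCLM A] at key
  suffices ‖T‖₊ = r.toNNReal by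
    rw [opNorm, ← coe_nnnorm, this, Real.coe_toNNReal r hr0]
  rw [← ENNReal.coe_inj, ← key]
  apply le_antisymm
  · refine iSup₂_le fun z hz => ENNReal.coe_le_coe.2 ?_
    rw [← NNReal.coe_le_coe, coe_nnnorm, Real.coe_toNNReal r hr0]
    exact hle z hz
  · refine le_iSup₂_of_le r hr (ENNReal.coe_le_coe.2 ?_)
    rw [← NNReal.coe_le_coe, coe_nnnorm, Real.coe_toNNReal r hr0, Real.norm_of_nonneg hr0]

theorem opNorm_eq_of_sub_sq_eq {m : ℕ} {A : Matrix (Fin m) (Fin m) ℝ} (hA : Aᵀ = A)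
    {α s t r : ℝ}
    (hsq : (A - algebraMap ℝ _ α) ^ 2 = s • (A - algebraMap ℝ _ α) + algebraMap ℝ _ t)
    {v : Fin m → ℝ} (hv : v ≠ 0) (hr : A *ᵥ v = r • v)
    (hroots : ∀ z, (z - α) ^ 2 = s * (z - α) + t → |z| ≤ r) : opNorm A = r :=
  opNorm_eq_of_spectrum hA (mem_spectrum_of_mulVec_eq hv hr) fun _ hz =>
    hroots _ (sub_sq_eq_of_mem_spectrum hsq hz)

theorem opNorm_transpose_mul_self_eq {m k : ℕ} (W : Matrix (Fin m) (Fin k) ℝ) :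
    opNorm (Wᵀ * W) = opNorm (W * Wᵀ) := by
  have h := Matrix.l2_opNorm_conjTranspose_mul_self W
  have h' := Matrix.l2_opNorm_conjTranspose_mul_self Wᴴ
  rw [Matrix.l2_opNorm_conjTranspose, Matrix.conjTranspose_conjTranspose] at h'
  simp only [Matrix.conjTranspose_eq_transpose_of_trivial] at h h'
  rw [opNorm, opNorm, Matrix.l2_opNorm_toEuclideanCLM, Matrix.l2_opNorm_toEuclideanCLM, h, h']

theorem transpose_mul_diagS_mul_eq_submatrix {n k : ℕ} (V : Matrix (Fin n) (Fin k) ℝ)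
    {i j l : Fin n} (hij : i ≠ j) (hil : i ≠ l) (hjl : j ≠ l) :
    Vᵀ * diagS {i, j, l} * V = (V.submatrix ![i, j, l] id)ᵀ * V.submatrix ![i, j, l] id := by
  ext p q
  rw [diagS, Matrix.mul_apply, Matrix.mul_apply, Fin.sum_univ_three]
  simp only [Matrix.mul_diagonal, Matrix.transpose_apply, mul_ite, mul_one, mul_zero, ite_mul,
    zero_mul, sum_ite_mem, univ_inter, Matrix.submatrix_apply, id]
  rw [sum_insert (by simp [hij, hil]), sum_insert (by simp [hjl]), sum_singleton]
  simp [add_assoc]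

theorem card_distinct_triples {α : Type*} [DecidableEq α] (S : Finset α) :
    #{p ∈ S ×ˢ S ×ˢ S | p.1 ≠ p.2.1 ∧ p.1 ≠ p.2.2 ∧ p.2.1 ≠ p.2.2} =
      #S * ((#S - 1) * (#S - 1) - (#S - 1)) := by
  rw [card_filter, sum_product, ← smul_eq_mul, ← sum_const]
  refine sum_congr rfl fun i hi => ?_
  rw [← card_erase_of_mem hi, ← offDiag_card, ← card_filter]
  congr 1
  ext q
  simp only [mem_filter, mem_product, mem_offDiag, mem_erase]
  tauto

theorem sum_distinct_triples_eq_six_smul {α β : Type*} [Fintype α] [DecidableEq α]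
    [AddCommMonoid β] (h : Finset α → β) :
    ∑ p : α × α × α with #{p.1, p.2.1, p.2.2} = 3, h {p.1, p.2.1, p.2.2} =
      6 • ∑ S : Finset α with #S = 3, h S := by
  rw [← sum_fiberwise_of_maps_to (g := fun p : α × α × α => ({p.1, p.2.1, p.2.2} : Finset α))
    (t := {S : Finset α | #S = 3}) (fun p hp => by simpa using hp), smul_sum]
  refine sum_congr rfl fun S hS => ?_
  rw [mem_filter] at hS
  have hfiber : (univ.filter fun p : α × α × α => #{p.1, p.2.1, p.2.2} = 3).filter
        (fun p => {p.1, p.2.1, p.2.2} = S) =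
      {p ∈ S ×ˢ S ×ˢ S | p.1 ≠ p.2.1 ∧ p.1 ≠ p.2.2 ∧ p.2.1 ≠ p.2.2} := by
    ext ⟨i, j, l⟩
    simp only [mem_filter, mem_univ, true_and, mem_product, card_triple_eq_three_iff]
    constructor
    · rintro ⟨hd, rfl⟩
      simp [hd]
    · rintro ⟨⟨hi, hj, hl⟩, hd⟩
      refine ⟨hd, eq_of_subset_of_card_le ?_ ?_⟩
      · simp [insert_subset_iff, hi, hj, hl]
      · rw [hS.2, card_triple_eq_three_iff.2 hd]
  rw [sum_congr rfl fun p hp => congrArg h (mem_filter.1 hp).2, sum_const, hfiber,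
    card_distinct_triples, hS.2]

theorem c_pos {n k : ℕ} (hk : 1 ≤ k) (hkn : k < n) : 0 < c n k := by
  have hk' : (1 : ℝ) ≤ k := by exact_mod_cast hk
  have hkn' : (k : ℝ) < n := by exact_mod_cast hkn
  apply Real.sqrt_pos.2
  apply div_pos <;> apply mul_pos <;> nlinarith

theorem c_le {n k : ℕ} (hk : 1 ≤ k) (hkn : k < n) : c n k ≤ 2 * ((k : ℝ) / n) := by
  have hk' : (1 : ℝ) ≤ k := by exact_mod_cast hk
  have hkn' : (k : ℝ) < n := by exact_mod_cast hkn
  rw [c, Real.sqrt_le_iff]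
  refine ⟨by positivity, ?_⟩
  have hn : (0 : ℝ) < n := by linarith
  rw [mul_pow, div_pow, ← mul_div_assoc,
    div_le_div_iff₀ (by apply mul_pos <;> nlinarith) (by positivity)]
  have : (k : ℝ) * (n - k) ≤ 2 ^ 2 * k ^ 2 * (n - 1) := by
    nlinarith [mul_nonneg (by linarith : (0 : ℝ) ≤ 4 * k - 1) (by linarith : (0 : ℝ) ≤ n - 1)]
  nlinarith [mul_le_mul_of_nonneg_right this (sq_nonneg (n : ℝ))]

namespace TwoUniformFrame

variable {n k : ℕ} (F : TwoUniformFrame n k)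

theorem Q_comm (i j : Fin n) : F.Q j i = F.Q i j := by
  simpa using congrFun (congrFun F.symm i) j

theorem Q_mul_self {i j : Fin n} (h : i ≠ j) : F.Q i j * F.Q i j = 1 := by
  rcases F.offdiag i j h with h | h <;> rw [h] <;> norm_num

theorem triangle_eq_one_or {i j l : Fin n} (hij : i ≠ j) (hil : i ≠ l) (hjl : j ≠ l) :
    F.Q i j * F.Q i l * F.Q j l = 1 ∨ F.Q i j * F.Q i l * F.Q j l = -1 := by
  rcases F.offdiag i j hij with h₁ | h₁ <;> rcases F.offdiag i l hil with h₂ | h₂ <;>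
    rcases F.offdiag j l hjl with h₃ | h₃ <;> simp [h₁, h₂, h₃]

theorem Q_submatrix_triple_sq {i j l : Fin n} (hij : i ≠ j) (hil : i ≠ l) (hjl : j ≠ l) :
    F.Q.submatrix ![i, j, l] ![i, j, l] ^ 2 =
      (F.Q i j * F.Q i l * F.Q j l) • F.Q.submatrix ![i, j, l] ![i, j, l] +
        algebraMap ℝ _ 2 := by
  have hij' := F.Q_mul_self hij
  have hil' := F.Q_mul_self hil
  have hjl' := F.Q_mul_self hjl
  ext p q
  simp only [sq, Matrix.mul_apply, Fin.sum_univ_three, Matrix.add_apply, Matrix.smul_apply,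
    Matrix.submatrix_apply, Matrix.algebraMap_matrix_apply, smul_eq_mul]
  fin_cases p <;> fin_cases q <;>
    simp [F.diag, F.Q_comm i j, F.Q_comm i l, F.Q_comm j l] <;> grind

theorem Q_submatrix_triple_mulVec_of_eq_one {i j l : Fin n} (hij : i ≠ j) (hil : i ≠ l)
    (h : F.Q i j * F.Q i l * F.Q j l = 1) :
    F.Q.submatrix ![i, j, l] ![i, j, l] *ᵥ ![1, F.Q i j, F.Q i l] =
      (2 : ℝ) • ![1, F.Q i j, F.Q i l] := by
  have hij' := F.Q_mul_self hij
  have hil' := F.Q_mul_self hil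
  ext p
  fin_cases p <;>
    simp [Matrix.mulVec, dotProduct, Fin.sum_univ_three, F.diag, F.Q_comm i j, F.Q_comm i l,
      F.Q_comm j l] <;> grind

theorem Q_submatrix_triple_mulVec_of_eq_neg_one {i j l : Fin n} (hij : i ≠ j) (hil : i ≠ l)
    (h : F.Q i j * F.Q i l * F.Q j l = -1) :
    F.Q.submatrix ![i, j, l] ![i, j, l] *ᵥ ![1, F.Q i j, 0] = (1 : ℝ) • ![1, F.Q i j, 0] := by
  have hij' := F.Q_mul_self hij
  have hil' := F.Q_mul_self hil
  ext p
  fin_cases p <;>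
    simp [Matrix.mulVec, dotProduct, Fin.sum_univ_three, F.diag, F.Q_comm i j, F.Q_comm i l,
      F.Q_comm j l] <;> grind

theorem gram_submatrix {m : ℕ} {e : Fin m → Fin n} (he : Function.Injective e) :
    F.V.submatrix e id * (F.V.submatrix e id)ᵀ =
      algebraMap ℝ _ ((k : ℝ) / n) + c n k • F.Q.submatrix e e := by
  change (F.V * F.Vᵀ).submatrix e e = _
  rw [F.gram]
  ext i j
  simp [Matrix.algebraMap_matrix_apply, Matrix.one_apply, he.eq_iff]

theorem opNorm_errorOp_triple (hk : 1 ≤ k) (hkn : k < n) {i j l : Fin n} (hij : i ≠ j)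
    (hil : i ≠ l) (hjl : j ≠ l) :
    opNorm (F.Vᵀ * diagS {i, j, l} * F.V) =
      if F.Q i j * F.Q i l * F.Q j l = 1 then (k : ℝ) / n + 2 * c n k
      else (k : ℝ) / n + c n k := by
  have he : Function.Injective ![i, j, l] := by
    intro p q hpq
    fin_cases p <;> fin_cases q <;> simp_all [eq_comm]
  set W := F.V.submatrix ![i, j, l] id
  set B := F.Q.submatrix ![i, j, l] ![i, j, l]
  set α : ℝ := k / n
  set ε := F.Q i j * F.Q i l * F.Q j l
  have hM : W * Wᵀ = algebraMap ℝ _ α + c n k • B := F.gram_submatrix he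
  have hsymm : (W * Wᵀ)ᵀ = W * Wᵀ := by rw [Matrix.transpose_mul, Matrix.transpose_transpose]
  have hsq : (W * Wᵀ - algebraMap ℝ _ α) ^ 2 =
      (ε * c n k) • (W * Wᵀ - algebraMap ℝ _ α) + algebraMap ℝ _ (2 * c n k ^ 2) := by
    rw [hM, add_sub_cancel_left, smul_pow, F.Q_submatrix_triple_sq hij hil hjl,
      Algebra.algebraMap_eq_smul_one, Algebra.algebraMap_eq_smul_one]
    module
  have heigen (x : Fin 3 → ℝ) (r : ℝ) (hx : B *ᵥ x = r • x) :
      (W * Wᵀ) *ᵥ x = (α + c n k * r) • x := by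
    rw [hM, Matrix.add_mulVec, Matrix.smul_mulVec, hx, Algebra.algebraMap_eq_smul_one,
      Matrix.smul_mulVec, Matrix.one_mulVec]
    module
  have hα : 0 ≤ α := by positivity
  have hc := c_pos hk hkn
  rw [transpose_mul_diagS_mul_eq_submatrix F.V hij hil hjl, opNorm_transpose_mul_self_eq]
  obtain h | h : ε = 1 ∨ ε = -1 := F.triangle_eq_one_or hij hil hjl
  · rw [if_pos h]
    refine opNorm_eq_of_sub_sq_eq hsymm hsq (v := ![1, F.Q i j, F.Q i l])
      (fun h0 => by simpa using congrFun h0 0) ?_ fun z hz => ?_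
    · rw [heigen _ _ (F.Q_submatrix_triple_mulVec_of_eq_one hij hil h), mul_comm]
    · rw [h] at hz
      have : (z - (α + 2 * c n k)) * (z - (α - c n k)) = 0 := by linear_combination hz
      rcases mul_eq_zero.1 this with h1 | h1 <;> rw [abs_le] <;> constructor <;> linarith
  · rw [if_neg (by rw [h]; norm_num)]
    have hcle := c_le hk hkn
    refine opNorm_eq_of_sub_sq_eq hsymm hsq (v := ![1, F.Q i j, 0])
      (fun h0 => by simpa using congrFun h0 0) ?_ fun z hz => ?_
    · rw [heigen _ _ (F.Q_submatrix_triple_mulVec_of_eq_neg_one hij hil h), mul_one]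
    · rw [h] at hz
      have : (z - (α + c n k)) * (z - (α - 2 * c n k)) = 0 := by linear_combination hz
      rcases mul_eq_zero.1 this with h1 | h1 <;> rw [abs_le] <;> constructor <;> linarith

theorem isCompleteBipartite_induce_iff (s : Set (Fin n)) :
    IsCompleteBipartite ((frameGraph F).induce s) ↔
      ∃ σ : Fin n → ℝ, (∀ i, σ i = 1 ∨ σ i = -1) ∧
        ∀ i ∈ s, ∀ j ∈ s, i ≠ j → F.Q i j = σ i * σ j := by
  constructor
  · rintro ⟨A, hA⟩
    refine ⟨fun i => if h : i ∈ s then (if (⟨i, h⟩ : s) ∈ A then -1 else 1) else 1,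
      fun i => by dsimp only; split_ifs <;> simp, fun i hi j hj hij => ?_⟩
    have hadj : F.Q i j = -1 ↔ ((⟨i, hi⟩ : s) ∈ A ↔ (⟨j, hj⟩ : s) ∉ A) := by
      rw [← hA]
      exact (and_iff_right hij).symm
    simp only [dif_pos hi, dif_pos hj]
    rcases F.offdiag i j hij with hq | hq <;> by_cases hiA : (⟨i, hi⟩ : s) ∈ A <;>
      by_cases hjA : (⟨j, hj⟩ : s) ∈ A <;>
      norm_num [hq, hiA, hjA] at hadj <;> norm_num [hq, hiA, hjA]
  · rintro ⟨σ, hσ, hQ⟩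
    refine ⟨{x | σ x = -1}, fun x y => ?_⟩
    change (x : Fin n) ≠ y ∧ F.Q x y = -1 ↔ _
    by_cases hxy : (x : Fin n) = y
    · obtain rfl : x = y := Subtype.ext hxy
      simp
    · rw [hQ x x.2 y y.2 hxy]
      rcases hσ x with h₁ | h₁ <;> rcases hσ y with h₂ | h₂ <;> simp [h₁, h₂, hxy] <;> norm_num

theorem isCompleteBipartite_triple_iff {i j l : Fin n} (hij : i ≠ j) (hil : i ≠ l)
    (hjl : j ≠ l) :
    IsCompleteBipartite ((frameGraph F).induce (({i, j, l} : Finset (Fin n)) : Set (Fin n))) ↔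
      F.Q i j * F.Q i l * F.Q j l = 1 := by
  rw [isCompleteBipartite_induce_iff]
  constructor
  · rintro ⟨σ, hσ, hQ⟩
    have hsq (x : Fin n) : σ x * σ x = 1 := by rcases hσ x with h | h <;> rw [h] <;> norm_num
    rw [hQ i (by simp) j (by simp) hij, hQ i (by simp) l (by simp) hil,
      hQ j (by simp) l (by simp) hjl]
    linear_combination (σ j * σ j * σ l * σ l) * hsq i + σ l * σ l * hsq j + hsq l
  · intro h
    refine ⟨fun x => if x = i then 1 else F.Q i x, fun x => ?_, fun x hx y hy hxy => ?_⟩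
    · dsimp only
      split_ifs with hx
      · exact Or.inl rfl
      · exact F.offdiag i x (Ne.symm hx)
    · have hij' := F.Q_mul_self hij
      have hil' := F.Q_mul_self hil
      simp only [coe_insert, coe_singleton, Set.mem_insert_iff, Set.mem_singleton_iff] at hx hy
      rcases hx with hx | hx | hx <;> rcases hy with hy | hy | hy <;> subst x y <;>
        simp_all [F.Q_comm i j, F.Q_comm i l, F.Q_comm j l, Ne.symm hij, Ne.symm hil] <;> grind

def bipartiteTriples : Finset (Finset (Fin n)) :=
  {S | S.card = 3 ∧ IsCompleteBipartite ((frameGraph F).induce (S : Set (Fin n)))}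

theorem opNorm_errorOp_of_card_eq_three (hk : 1 ≤ k) (hkn : k < n) {S : Finset (Fin n)}
    (hS : S.card = 3) :
    opNorm (F.Vᵀ * diagS S * F.V) =
      if IsCompleteBipartite ((frameGraph F).induce (S : Set (Fin n)))
      then (k : ℝ) / n + 2 * c n k else (k : ℝ) / n + c n k := by
  obtain ⟨i, j, l, hij, hil, hjl, rfl⟩ := card_eq_three.1 hS
  rw [F.opNorm_errorOp_triple hk hkn hij hil hjl, F.isCompleteBipartite_triple_iff hij hil hjl]

theorem trace_Q_mul_self : (F.Q * F.Q).trace = n * (n - 1) := by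
  have hterm (i j : Fin n) : F.Q i j * F.Q j i = 1 - if i = j then 1 else 0 := by
    split_ifs with h
    · simp [h, F.diag]
    · rw [F.Q_comm i j, F.Q_mul_self h, sub_zero]
  simp [Matrix.trace, Matrix.mul_apply, hterm, sum_sub_distrib]
  ring

theorem c_mul_trace_Q_pow_three (hk : 1 ≤ k) (hkn : k < n) :
    c n k * (F.Q ^ 3).trace = (1 - 2 * ((k : ℝ) / n)) * (n * (n - 1)) := by
  set α : ℝ := k / n
  have hP : F.V * F.Vᵀ * (F.V * F.Vᵀ) = F.V * F.Vᵀ := by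
    rw [Matrix.mul_assoc, ← Matrix.mul_assoc F.Vᵀ, F.parseval, Matrix.one_mul]
  rw [F.gram] at hP
  have hQ2 : c n k ^ 2 • (F.Q * F.Q) = (α - α ^ 2) • 1 + (c n k - 2 * α * c n k) • F.Q := by
    simp only [Matrix.add_mul, Matrix.mul_add, Matrix.smul_mul, Matrix.mul_smul,
      Matrix.mul_one, Matrix.one_mul] at hP
    linear_combination (norm := module) hP
  have htrQ : F.Q.trace = 0 := by simp [Matrix.trace, F.diag]
  have key : c n k * (c n k * (F.Q ^ 3).trace) = c n k * ((1 - 2 * α) * (n * (n - 1))) := by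
    rw [← mul_assoc, ← sq, ← smul_eq_mul, ← Matrix.trace_smul, pow_three', ← Matrix.smul_mul,
      hQ2, Matrix.add_mul, Matrix.trace_add, Matrix.smul_mul, Matrix.smul_mul, Matrix.one_mul,
      Matrix.trace_smul, Matrix.trace_smul, htrQ, F.trace_Q_mul_self]
    simp only [smul_eq_mul]
    ring
  exact mul_left_cancel₀ (c_pos hk hkn).ne' key

theorem triangle_eq_ite {i j l : Fin n} (hij : i ≠ j) (hil : i ≠ l) (hjl : j ≠ l) :
    F.Q i j * F.Q j l * F.Q l i =
      if IsCompleteBipartite ((frameGraph F).induce (({i, j, l} : Finset (Fin n)) : Set (Fin n)))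
      then 1 else -1 := by
  rw [F.isCompleteBipartite_triple_iff hij hil hjl, F.Q_comm i l,
    show F.Q i j * F.Q j l * F.Q i l = F.Q i j * F.Q i l * F.Q j l by ring]
  rcases F.triangle_eq_one_or hij hil hjl with h | h <;> rw [h] <;> norm_num

theorem trace_Q_pow_three :
    (F.Q ^ 3).trace =
      6 * ∑ S : Finset (Fin n) with S.card = 3,
        if IsCompleteBipartite ((frameGraph F).induce (S : Set (Fin n))) then (1 : ℝ) else -1 := by
  have htriples : (F.Q ^ 3).trace =
      ∑ p : Fin n × Fin n × Fin n, F.Q p.1 p.2.1 * F.Q p.2.1 p.2.2 * F.Q p.2.2 p.1 := by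
    simp [pow_three', Matrix.trace, Matrix.mul_apply, Fintype.sum_prod_type, sum_mul]
    exact sum_congr rfl fun _ _ => sum_comm
  rw [htriples, ← sum_filter_of_ne (p := fun p => #{p.1, p.2.1, p.2.2} = 3),
    show (6 : ℝ) = ((6 : ℕ) : ℝ) by norm_num, ← nsmul_eq_mul, ← sum_distinct_triples_eq_six_smul]
  · refine sum_congr rfl fun ⟨i, j, l⟩ hp => ?_
    obtain ⟨hij, hil, hjl⟩ := card_triple_eq_three_iff.1 (mem_filter.1 hp).2
    exact F.triangle_eq_ite hij hil hjl
  · rintro ⟨i, j, l⟩ - hp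
    refine card_triple_eq_three_iff.2 ⟨fun (h : i = j) => hp ?_, fun (h : i = l) => hp ?_,
      fun (h : j = l) => hp ?_⟩ <;>
      simp [h, F.diag]

theorem card_triples_not_bipartite :
    (#{S : Finset (Fin n) | S.card = 3 ∧
      ¬IsCompleteBipartite ((frameGraph F).induce (S : Set (Fin n)))} : ℝ) =
        n.choose 3 - #F.bipartiteTriples := by
  rw [eq_sub_iff_add_eq, ← Nat.cast_add, bipartiteTriples, ← filter_filter, ← filter_filter,
    add_comm, card_filter_add_card_filter_not]
  simp

theorem card_bipartiteTriples (hk : 1 ≤ k) (hkn : k < n) :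
    (#F.bipartiteTriples : ℝ) =
      (n.choose 3 + (1 - 2 * ((k : ℝ) / n)) * (n * (n - 1)) / (6 * c n k)) / 2 := by
  have hsigns : ∑ S : Finset (Fin n) with S.card = 3,
      (if IsCompleteBipartite ((frameGraph F).induce (S : Set (Fin n))) then (1 : ℝ) else -1) =
        2 * #F.bipartiteTriples - n.choose 3 := by
    rw [sum_ite, sum_const, sum_const, filter_filter, filter_filter, nsmul_eq_mul,
      nsmul_eq_mul, card_triples_not_bipartite, bipartiteTriples]
    ring
  have htrace := F.c_mul_trace_Q_pow_three hk hkn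
  rw [F.trace_Q_pow_three, hsigns] at htrace
  have hc := c_pos hk hkn
  field_simp
  linear_combination htrace

theorem errP_three_eq (hk : 1 ≤ k) (hkn : k < n) (p : ℝ) :
    errP F.V 3 p = ((n.choose 3 : ℝ)⁻¹ *
      (((k : ℝ) / n + 2 * c n k) ^ p * #F.bipartiteTriples +
        ((k : ℝ) / n + c n k) ^ p * ((n.choose 3 : ℝ) - #F.bipartiteTriples))) ^ (1 / p) := by
  rw [errP, sum_congr rfl fun S hS => by
    rw [F.opNorm_errorOp_of_card_eq_three hk hkn (mem_filter.1 hS).2, apply_ite (· ^ p)],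
    sum_ite, sum_const, sum_const, filter_filter, filter_filter, nsmul_eq_mul, nsmul_eq_mul,
    F.card_triples_not_bipartite, bipartiteTriples]
  ring_nf

end TwoUniformFrame

theorem statement17 (n k : ℕ) (hk : 1 ≤ k) (hkn : k < n)
    (F1 F2 : TwoUniformFrame n k) :
    ∃ E3 : ℕ,
      (Finset.univ.filter fun S : Finset (Fin n) =>
          S.card = 3 ∧
            IsCompleteBipartite ((frameGraph F1).induce (S : Set (Fin n)))).card = E3 ∧
      (Finset.univ.filter fun S : Finset (Fin n) =>
          S.card = 3 ∧
            IsCompleteBipartite ((frameGraph F2).induce (S : Set (Fin n)))).card = E3 ∧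
      ∀ p : ℝ, 2 ≤ p →
        errP F1.V 3 p = errP F2.V 3 p ∧
        errP F1.V 3 p = ((n.choose 3 : ℝ)⁻¹ *
            (((k : ℝ) / n + 2 * c n k) ^ p * E3 +
              ((k : ℝ) / n + c n k) ^ p * ((n.choose 3 : ℝ) - E3))) ^ (1 / p) := by
  have hcard : #F2.bipartiteTriples = #F1.bipartiteTriples := by
    exact_mod_cast (F2.card_bipartiteTriples hk hkn).trans (F1.card_bipartiteTriples hk hkn).symm
  refine ⟨#F1.bipartiteTriples, rfl, hcard, fun p _ => ⟨?_, F1.errP_three_eq hk hkn p⟩⟩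
  rw [F1.errP_three_eq hk hkn, F2.errP_three_eq hk hkn, hcard]

end FramesErasures
end
end

section
/- Let H be an n×n graph Hadamard matrix with n ≥ 48, and let F be the real 2-uniform (n,k)-frame with signature matrix Q = H − I (so k = (n + √n)/2). Then the graph G_F contains an induced complete bipartite subgraph on 5 vertices, and consequently e_m^∞(F) = k/n + (m−1)·c_{n,k} for all m ≤ 5. -/
/-!
Switching a graph Hadamard matrix `H` by the signs `ε` of its row `z` gives a graph Hadamard
matrix `E = D_ε H D_ε` whose row `z` is all ones. Orthogonality to that row forces every other
row to sum to zero, so any two rows `a ≠ b` other than `z` share exactly `n / 4` entries `1`.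
Pick `a, b` with `E a b = 1`; their common `1`-positions outside `{z, a, b}` form a set `T` with
`|T| ≥ n / 4 - 3`. Since `E + √n I` is positive semidefinite, a set on which `E` is `-1` off the
diagonal has at most `2 + √n` elements, so for `n ≥ 48` some `c ≠ d` in `T` have `E c d = 1`.
On `S = {z, a, b, c, d}` this gives `H i j = ε i ε j`, so `G_F` induces a complete bipartite graph.

For the erasure norms put `r = k / n + (|S| - 1) c_{n,k}`. With `u = D_S V x` one has
`‖Vᵀ D_S V x‖² = uᵀ (V Vᵀ) u ≤ r ‖u‖²` and `‖u‖² = ⟨Vᵀ D_S V x, x⟩`, whence `‖Vᵀ D_S V‖ ≤ r`;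
when `Q i j = ε i ε j` on `S`, the vector `Vᵀ D_S ε` is an eigenvector with eigenvalue `r`.
-/

open Matrix
open scoped Classical

noncomputable section

namespace FramesErasures

open scoped RealInnerProductSpace Finset

theorem opNorm_le_of_norm_sq_le_inner {E : Type*} [NormedAddCommGroup E]
    [InnerProductSpace ℝ E] (T : E →L[ℝ] E) {r : ℝ} (hr : 0 ≤ r)
    (h : ∀ x, ‖T x‖ ^ 2 ≤ r * ⟪T x, x⟫) : ‖T‖ ≤ r := by
  refine T.opNorm_le_bound hr fun x => ?_
  have hx : ‖T x‖ * ‖T x‖ ≤ ‖T x‖ * (r * ‖x‖) := by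
    calc ‖T x‖ * ‖T x‖ = ‖T x‖ ^ 2 := (sq _).symm
      _ ≤ r * ⟪T x, x⟫ := h x
      _ ≤ r * (‖T x‖ * ‖x‖) := by gcongr; exact real_inner_le_norm _ _
      _ = ‖T x‖ * (r * ‖x‖) := by ring
  rcases (norm_nonneg (T x)).eq_or_lt with h0 | hpos
  · rw [← h0]; positivity
  · exact le_of_mul_le_mul_left hx hpos

theorem opNorm_le_of_dotProduct_le {k : ℕ} (A : Matrix (Fin k) (Fin k) ℝ) {r : ℝ}
    (hr : 0 ≤ r) (h : ∀ x, (A *ᵥ x) ⬝ᵥ (A *ᵥ x) ≤ r * ((A *ᵥ x) ⬝ᵥ x)) :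
    opNorm A ≤ r := by
  refine opNorm_le_of_norm_sq_le_inner _ hr fun x => ?_
  rw [← real_inner_self_eq_norm_sq, EuclideanSpace.inner_eq_star_dotProduct,
    EuclideanSpace.inner_eq_star_dotProduct]
  simpa [dotProduct_comm x.ofLp] using h x.ofLp

theorem le_opNorm_of_mulVec_eq_smul {k : ℕ} (A : Matrix (Fin k) (Fin k) ℝ) {r : ℝ}
    {y : Fin k → ℝ} (hy : y ≠ 0) (hAy : A *ᵥ y = r • y) : r ≤ opNorm A := by
  have hy' : 0 < ‖WithLp.toLp 2 y‖ := norm_pos_iff.mpr (by simpa using hy)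
  have hnorm := (toEuclideanCLM (𝕜 := ℝ) A).le_opNorm (WithLp.toLp 2 y)
  rw [toEuclideanCLM_toLp, hAy, WithLp.toLp_smul, norm_smul, Real.norm_eq_abs] at hnorm
  exact (le_abs_self r).trans (le_of_mul_le_mul_right hnorm hy')

theorem neg_mul_dotProduct_self_le_dotProduct_mulVec {ι : Type*} [Fintype ι] [DecidableEq ι]
    (M : Matrix ι ι ℝ) (hsymm : Mᵀ = M) {s : ℝ} (hs : 0 < s)
    (hsq : M * M = s ^ 2 • (1 : Matrix ι ι ℝ)) (u : ι → ℝ) :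
    -s * (u ⬝ᵥ u) ≤ u ⬝ᵥ (M *ᵥ u) := by
  have hnonneg : 0 ≤ (M *ᵥ u + s • u) ⬝ᵥ (M *ᵥ u + s • u) :=
    Finset.sum_nonneg fun i _ => mul_self_nonneg _
  have hMM : (M *ᵥ u) ⬝ᵥ (M *ᵥ u) = s ^ 2 * (u ⬝ᵥ u) := by
    rw [dotProduct_comm, dotProduct_mulVec, ← mulVec_transpose, hsymm, mulVec_mulVec,
      hsq, smul_mulVec, one_mulVec, smul_dotProduct, smul_eq_mul]
  simp only [add_dotProduct, dotProduct_add, smul_dotProduct, dotProduct_smul, smul_eq_mul,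
    hMM, dotProduct_comm u (M *ᵥ u)] at hnonneg
  rw [dotProduct_comm u (M *ᵥ u)]
  nlinarith

theorem diagS_mulVec_apply (S : Finset (Fin n)) (v : Fin n → ℝ) (i : Fin n) :
    (diagS S *ᵥ v) i = if i ∈ S then v i else 0 := by
  simp [diagS, mulVec_diagonal]

theorem diagS_mulVec_dotProduct_self (S : Finset (Fin n)) (v : Fin n → ℝ) :
    (diagS S *ᵥ v) ⬝ᵥ (diagS S *ᵥ v) = v ⬝ᵥ (diagS S *ᵥ v) := by
  simp only [dotProduct, diagS_mulVec_apply]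
  exact Finset.sum_congr rfl fun i _ => by split_ifs <;> simp

section ErrorOperator

variable {n k : ℕ} (V : Matrix (Fin n) (Fin k) ℝ) (Q : Matrix (Fin n) (Fin n) ℝ) {a c : ℝ}

theorem dotProduct_mulVec_le_of_support (hdiag : ∀ i, Q i i = 0) (hbound : ∀ i j, |Q i j| ≤ 1)
    (S : Finset (Fin n)) (u : Fin n → ℝ) (hu : ∀ i ∉ S, u i = 0) :
    u ⬝ᵥ (Q *ᵥ u) ≤ ((#S : ℝ) - 1) * (u ⬝ᵥ u) := by
  have hterm : ∀ i j,
      u i * (Q i j * u j) ≤ (u i ^ 2 + u j ^ 2) / 2 - if i = j then u i ^ 2 else 0 := by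
    intro i j
    split_ifs with hij
    · subst hij; simp [hdiag]
    · have h1 : u i * (Q i j * u j) ≤ |u i| * |u j| := by
        calc u i * (Q i j * u j) ≤ |u i * (Q i j * u j)| := le_abs_self _
          _ = |Q i j| * (|u i| * |u j|) := by rw [abs_mul, abs_mul]; ring
          _ ≤ 1 * (|u i| * |u j|) := by gcongr; exact hbound i j
          _ = |u i| * |u j| := one_mul _
      nlinarith [sq_nonneg (|u i| - |u j|), sq_abs (u i), sq_abs (u j)]
  have hsupp : ∀ f : Fin n → ℝ, (∀ i ∉ S, f i = 0) → ∑ i, f i = ∑ i ∈ S, f i :=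
    fun f hf => (Finset.sum_subset (Finset.subset_univ S) fun i _ hi => hf i hi).symm
  have huu : u ⬝ᵥ u = ∑ i ∈ S, u i ^ 2 := by
    rw [dotProduct, hsupp _ fun i hi => by simp [hu i hi]]
    simp only [sq]
  have huQu : u ⬝ᵥ (Q *ᵥ u) = ∑ i ∈ S, ∑ j ∈ S, u i * (Q i j * u j) := by
    rw [dotProduct, hsupp _ fun i hi => by simp [hu i hi]]
    refine Finset.sum_congr rfl fun i _ => ?_
    rw [mulVec, dotProduct, Finset.mul_sum, hsupp _ fun j hj => by simp [hu j hj]]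
  calc u ⬝ᵥ (Q *ᵥ u)
      ≤ ∑ i ∈ S, ∑ j ∈ S, ((u i ^ 2 + u j ^ 2) / 2 - if i = j then u i ^ 2 else 0) := by
        rw [huQu]; exact Finset.sum_le_sum fun i _ => Finset.sum_le_sum fun j _ => hterm i j
    _ = ((#S : ℝ) - 1) * (u ⬝ᵥ u) := by
        simp only [Finset.sum_sub_distrib, add_div, Finset.sum_add_distrib, Finset.sum_const,
          Finset.sum_ite_eq, nsmul_eq_mul, huu, ← Finset.sum_div, ← Finset.mul_sum]
        rw [Finset.sum_ite_mem, Finset.inter_self]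
        ring

theorem transpose_mulVec_dotProduct_self_le (hc : 0 ≤ c)
    (hgram : V * Vᵀ = a • (1 : Matrix (Fin n) (Fin n) ℝ) + c • Q)
    (hdiag : ∀ i, Q i i = 0) (hbound : ∀ i j, |Q i j| ≤ 1) (S : Finset (Fin n))
    (u : Fin n → ℝ) (hu : ∀ i ∉ S, u i = 0) :
    (Vᵀ *ᵥ u) ⬝ᵥ (Vᵀ *ᵥ u) ≤ (a + ((#S : ℝ) - 1) * c) * (u ⬝ᵥ u) := by
  have hQ := dotProduct_mulVec_le_of_support Q hdiag hbound S u hu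
  have hexpand :
      (Vᵀ *ᵥ u) ⬝ᵥ (Vᵀ *ᵥ u) = a * (u ⬝ᵥ u) + c * (u ⬝ᵥ (Q *ᵥ u)) := by
    rw [dotProduct_mulVec, vecMul_transpose, dotProduct_comm, mulVec_mulVec, hgram, add_mulVec,
      smul_mulVec, smul_mulVec, one_mulVec, dotProduct_add, dotProduct_smul, dotProduct_smul,
      smul_eq_mul, smul_eq_mul]
  rw [hexpand]
  nlinarith [mul_le_mul_of_nonneg_left hQ hc]

theorem opNorm_transpose_mul_diagS_mul_le_s18 (ha : 0 ≤ a) (hc : 0 ≤ c)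
    (hgram : V * Vᵀ = a • (1 : Matrix (Fin n) (Fin n) ℝ) + c • Q)
    (hdiag : ∀ i, Q i i = 0) (hbound : ∀ i j, |Q i j| ≤ 1) {S : Finset (Fin n)}
    (hS : S.Nonempty) :
    opNorm (Vᵀ * diagS S * V) ≤ a + ((#S : ℝ) - 1) * c := by
  have hS1 : (1 : ℝ) ≤ S.card := by exact_mod_cast hS.card_pos
  refine opNorm_le_of_dotProduct_le _ (by nlinarith) fun x => ?_
  set u := diagS S *ᵥ (V *ᵥ x)
  have hAx : (Vᵀ * diagS S * V) *ᵥ x = Vᵀ *ᵥ u := by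
    simp only [u, mulVec_mulVec, Matrix.mul_assoc]
  have hinner : (Vᵀ *ᵥ u) ⬝ᵥ x = u ⬝ᵥ u := by
    rw [diagS_mulVec_dotProduct_self, dotProduct_comm, dotProduct_mulVec,
      vecMul_transpose, dotProduct_comm]
  rw [hAx, hinner]
  exact transpose_mulVec_dotProduct_self_le V Q hc hgram hdiag hbound S u
    fun i hi => by simp only [u, diagS_mulVec_apply, if_neg hi]

theorem signature_mulVec_diagS_mulVec_apply (hdiag : ∀ i, Q i i = 0) {S : Finset (Fin n)}
    {ε : Fin n → ℝ} (hε : ∀ i, ε i = 1 ∨ ε i = -1)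
    (hpat : ∀ i ∈ S, ∀ j ∈ S, i ≠ j → Q i j = ε i * ε j) {i : Fin n} (hi : i ∈ S) :
    (Q *ᵥ (diagS S *ᵥ ε)) i = ((#S : ℝ) - 1) * ε i := by
  have hterm : ∀ j ∈ S.erase i, Q i j * ε j = ε i := fun j hj => by
    obtain ⟨hji, hjS⟩ := Finset.mem_erase.mp hj
    rw [hpat i hi j hjS (Ne.symm hji)]
    rcases hε j with h | h <;> rw [h] <;> ring
  rw [mulVec, dotProduct]
  simp only [diagS_mulVec_apply, mul_ite, mul_zero, Finset.sum_ite_mem, Finset.univ_inter]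
  rw [← Finset.add_sum_erase S _ hi, hdiag, Finset.sum_congr rfl hterm, Finset.sum_const,
    Finset.card_erase_of_mem hi, nsmul_eq_mul, Nat.cast_pred (Finset.card_pos.mpr ⟨i, hi⟩)]
  ring

theorem le_opNorm_transpose_mul_diagS_mul_s18
    (hgram : V * Vᵀ = a • (1 : Matrix (Fin n) (Fin n) ℝ) + c • Q)
    (hdiag : ∀ i, Q i i = 0) {S : Finset (Fin n)} (hS : S.Nonempty) {ε : Fin n → ℝ}
    (hε : ∀ i, ε i = 1 ∨ ε i = -1)
    (hpat : ∀ i ∈ S, ∀ j ∈ S, i ≠ j → Q i j = ε i * ε j) :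
    a + ((#S : ℝ) - 1) * c ≤ opNorm (Vᵀ * diagS S * V) := by
  set r := a + ((#S : ℝ) - 1) * c
  rcases le_or_gt r 0 with hr | hr
  · exact hr.trans (norm_nonneg _)
  set x := diagS S *ᵥ ε
  have hGx : diagS S *ᵥ ((V * Vᵀ) *ᵥ x) = r • x := by
    ext i
    rw [hgram, add_mulVec, smul_mulVec, smul_mulVec, one_mulVec]
    by_cases hi : i ∈ S
    · simp only [diagS_mulVec_apply, if_pos hi, Pi.add_apply, Pi.smul_apply, smul_eq_mul, x,
        signature_mulVec_diagS_mulVec_apply Q hdiag hε hpat hi, r]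
      ring
    · simp only [diagS_mulVec_apply, if_neg hi, Pi.smul_apply, smul_zero, x]
  have hx : x ≠ 0 := by
    obtain ⟨i, hi⟩ := hS
    intro h
    have := congrFun h i
    simp only [x, diagS_mulVec_apply, if_pos hi, Pi.zero_apply] at this
    rcases hε i with h | h <;> simp [h] at this
  refine le_opNorm_of_mulVec_eq_smul _ (y := Vᵀ *ᵥ x) (fun hy => hx ?_) ?_
  · have : r • x = 0 := by
      rw [← hGx, ← mulVec_mulVec, hy, mulVec_zero, mulVec_zero]
    exact (smul_eq_zero.mp this).resolve_left hr.ne'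
  · calc (Vᵀ * diagS S * V) *ᵥ (Vᵀ *ᵥ x)
        = Vᵀ *ᵥ (diagS S *ᵥ ((V * Vᵀ) *ᵥ x)) := by
          simp only [mulVec_mulVec, Matrix.mul_assoc]
      _ = r • (Vᵀ *ᵥ x) := by rw [hGx, mulVec_smul]

end ErrorOperator

theorem TwoUniformFrame.abs_Q_le_one {n k : ℕ} (F : TwoUniformFrame n k) (i j : Fin n) :
    |F.Q i j| ≤ 1 := by
  by_cases hij : i = j
  · simp [hij, F.diag]
  · rcases F.offdiag i j hij with h | h <;> simp [h]

theorem TwoUniformFrame.errInf_eq {n k : ℕ} (F : TwoUniformFrame n k) {S : Finset (Fin n)}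
    {m : ℕ} (hm : 1 ≤ m) (hS : #S = m) {ε : Fin n → ℝ}
    (hε : ∀ i, ε i = 1 ∨ ε i = -1)
    (hpat : ∀ i ∈ S, ∀ j ∈ S, i ≠ j → F.Q i j = ε i * ε j) :
    errInf F.V m = (k : ℝ) / n + ((m : ℝ) - 1) * c n k := by
  have hc : 0 ≤ c n k := Real.sqrt_nonneg _
  have hupper : ∀ T : Finset (Fin n), #T = m →
      opNorm (F.Vᵀ * diagS T * F.V) ≤ (k : ℝ) / n + ((m : ℝ) - 1) * c n k := fun T hT => by
    have hT0 : T.Nonempty := Finset.card_pos.mp (by omega)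
    simpa [hT] using opNorm_transpose_mul_diagS_mul_le_s18 F.V F.Q (by positivity) hc F.gram F.diag
      F.abs_Q_le_one hT0
  refine IsGreatest.csSup_eq ⟨⟨S, hS, le_antisymm ?_ (hupper S hS)⟩, ?_⟩
  · simpa [hS] using le_opNorm_transpose_mul_diagS_mul_s18 F.V F.Q F.gram F.diag
      (Finset.card_pos.mp (by omega)) hε hpat
  · rintro _ ⟨T, hT, rfl⟩
    exact hupper T hT

theorem TwoUniformFrame.isCompleteBipartite_induce {n k : ℕ} (F : TwoUniformFrame n k)
    {S : Finset (Fin n)} {ε : Fin n → ℝ} (hε : ∀ i, ε i = 1 ∨ ε i = -1)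
    (hpat : ∀ i ∈ S, ∀ j ∈ S, i ≠ j → F.Q i j = ε i * ε j) :
    IsCompleteBipartite ((frameGraph F).induce (S : Set (Fin n))) := by
  refine ⟨{v | ε v.1 = 1}, fun i j => ?_⟩
  change (i.1 ≠ j.1 ∧ F.Q i j = -1) ↔ _
  by_cases hij : i.1 = j.1
  · simp [hij]
  · rw [hpat i i.2 j j.2 hij]
    rcases hε i with hi | hi <;> rcases hε j with hj | hj <;> norm_num [hij, hi, hj]

theorem diagonal_mul_diagonal_self_of_sign {n : ℕ} {ε : Fin n → ℝ}
    (hε : ∀ i, ε i = 1 ∨ ε i = -1) : diagonal ε * diagonal ε = 1 := by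
  rw [diagonal_mul_diagonal, ← diagonal_one]
  congr 1
  ext i
  rcases hε i with h | h <;> simp [h]

structure IsGraphHadamard {n : ℕ} (H : Matrix (Fin n) (Fin n) ℝ) : Prop where
  symm : Hᵀ = H
  entry : ∀ i j, H i j = 1 ∨ H i j = -1
  diag : ∀ i, H i i = 1
  mul_self : H * H = (n : ℝ) • (1 : Matrix (Fin n) (Fin n) ℝ)

namespace IsGraphHadamard

variable {n : ℕ} {E : Matrix (Fin n) (Fin n) ℝ}

theorem apply_comm (hE : IsGraphHadamard E) (i j : Fin n) : E i j = E j i := by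
  simpa using congrFun (congrFun hE.symm j) i

theorem sum_mul_eq (hE : IsGraphHadamard E) (i j : Fin n) :
    ∑ v, E i v * E j v = if i = j then (n : ℝ) else 0 := by
  have := congrFun (congrFun hE.mul_self i) j
  simp only [mul_apply, Matrix.smul_apply, Matrix.one_apply, smul_eq_mul, mul_ite,
    mul_one, mul_zero] at this
  simpa [hE.apply_comm _ j] using this

theorem sum_row_eq_zero (hE : IsGraphHadamard E) {z : Fin n} (hz : ∀ v, E z v = 1) {i : Fin n}
    (hi : i ≠ z) : ∑ v, E i v = 0 := by
  simpa [hz, hi] using hE.sum_mul_eq i z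

theorem card_common_ones (hE : IsGraphHadamard E) {z : Fin n} (hz : ∀ v, E z v = 1)
    {i j : Fin n} (hi : i ≠ z) (hj : j ≠ z) :
    4 * (#{v | E i v = 1 ∧ E j v = 1} : ℝ) = n + if i = j then (n : ℝ) else 0 := by
  have hind : ∀ v, (1 + E i v) * (1 + E j v) = if E i v = 1 ∧ E j v = 1 then 4 else 0 := by
    intro v
    rcases hE.entry i v with h1 | h1 <;> rcases hE.entry j v with h2 | h2 <;> norm_num [h1, h2]
  have hsum : ∑ v, (1 + E i v) * (1 + E j v) = n + if i = j then (n : ℝ) else 0 := by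
    simp only [add_mul, one_mul, mul_add, mul_one, Finset.sum_add_distrib, hE.sum_mul_eq,
      hE.sum_row_eq_zero hz hi, hE.sum_row_eq_zero hz hj, Finset.sum_const, Finset.card_univ,
      Fintype.card_fin, nsmul_eq_mul]
    ring
  rw [← hsum, Finset.sum_congr rfl fun v _ => hind v, ← Finset.sum_filter, Finset.sum_const,
    nsmul_eq_mul]
  ring

theorem card_le_of_pairwise_eq_neg_one (hE : IsGraphHadamard E) (hn : 0 < n)
    {T : Finset (Fin n)} (hT : ∀ c ∈ T, ∀ d ∈ T, c ≠ d → E c d = -1) :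
    (#T : ℝ) ≤ 2 + Real.sqrt n := by
  have hrow : ∀ c ∈ T, ∑ d ∈ T, E c d = 2 - #T := fun c hc => by
    rw [← Finset.add_sum_erase T _ hc, hE.diag,
      Finset.sum_congr rfl fun d hd => hT c hc d (Finset.mem_erase.mp hd).2
        (Finset.mem_erase.mp hd).1.symm,
      Finset.sum_const, Finset.card_erase_of_mem hc, nsmul_eq_mul,
      Nat.cast_pred (Finset.card_pos.mpr ⟨c, hc⟩)]
    ring
  set u : Fin n → ℝ := fun v => if v ∈ T then 1 else 0
  have huu : u ⬝ᵥ u = #T := by simp [u, dotProduct]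
  have huEu : u ⬝ᵥ (E *ᵥ u) = #T * (2 - #T) := by
    simp only [u, dotProduct, mulVec, mul_ite, ite_mul, mul_one, one_mul, mul_zero,
      zero_mul, Finset.sum_ite_mem, Finset.univ_inter]
    rw [Finset.sum_congr rfl hrow, Finset.sum_const, nsmul_eq_mul]
  have hs : 0 < Real.sqrt n := Real.sqrt_pos.mpr (by exact_mod_cast hn)
  have hbound := neg_mul_dotProduct_self_le_dotProduct_mulVec E hE.symm hs
    (by rw [Real.sq_sqrt (Nat.cast_nonneg n)]; exact hE.mul_self) u
  rw [huu, huEu] at hbound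
  rcases (Nat.cast_nonneg (α := ℝ) #T).eq_or_lt with h0 | hpos
  · rw [← h0]; positivity
  · nlinarith

theorem switch (hE : IsGraphHadamard E) {ε : Fin n → ℝ} (hε : ∀ i, ε i = 1 ∨ ε i = -1) :
    IsGraphHadamard (diagonal ε * E * diagonal ε) := by
  have happly : ∀ i j, (diagonal ε * E * diagonal ε) i j = ε i * E i j * ε j := by
    simp [mul_diagonal, diagonal_mul]
  have hεε := diagonal_mul_diagonal_self_of_sign hε
  refine ⟨?_, fun i j => ?_, fun i => ?_, ?_⟩
  · rw [transpose_mul, transpose_mul, diagonal_transpose, hE.symm, Matrix.mul_assoc]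
  · rw [happly]
    rcases hε i with h1 | h1 <;> rcases hε j with h2 | h2 <;> rcases hE.entry i j with h3 | h3 <;>
      norm_num [h1, h2, h3]
  · rw [happly, hE.diag]
    rcases hε i with h | h <;> norm_num [h]
  · calc diagonal ε * E * diagonal ε * (diagonal ε * E * diagonal ε)
        = diagonal ε * (E * (diagonal ε * diagonal ε) * E) * diagonal ε := by
          simp only [Matrix.mul_assoc]
      _ = (n : ℝ) • (1 : Matrix (Fin n) (Fin n) ℝ) := by
        rw [hεε, Matrix.mul_one, hE.mul_self, Matrix.mul_smul, Matrix.smul_mul, Matrix.mul_one,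
          hεε]

theorem exists_ne_eq_one (hE : IsGraphHadamard E) (hn : 5 ≤ n) {z : Fin n}
    (hz : ∀ v, E z v = 1) : ∃ a b, a ≠ z ∧ b ≠ z ∧ b ≠ a ∧ E a b = 1 := by
  have : Nontrivial (Fin n) := Fin.nontrivial_iff_two_le.mpr (by omega)
  obtain ⟨a, haz⟩ := exists_ne z
  set P : Finset (Fin n) := {v | E a v = 1}
  have hcard : 4 * (#P : ℝ) = n + n := by simpa [P] using hE.card_common_ones hz haz haz
  have hle : (#P : ℝ) ≤ #(P \ {z, a}) + 2 := by
    exact_mod_cast Finset.card_le_card_sdiff_add_card.trans (by gcongr; exact Finset.card_le_two)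
  have hn' : (5 : ℝ) ≤ n := by exact_mod_cast hn
  obtain ⟨b, hb⟩ : (P \ {z, a}).Nonempty := by
    rw [← Finset.card_pos, ← Nat.cast_pos (α := ℝ)]
    linarith
  simp only [P, Finset.mem_sdiff, Finset.mem_filter, Finset.mem_univ, true_and,
    Finset.mem_insert, Finset.mem_singleton, not_or] at hb
  exact ⟨a, b, haz, hb.2.1, hb.2.2, hb.1⟩

theorem le_card_common_ones_sdiff (hE : IsGraphHadamard E) {z : Fin n} (hz : ∀ v, E z v = 1)
    {a b : Fin n} (haz : a ≠ z) (hbz : b ≠ z) (hba : b ≠ a) :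
    (n : ℝ) ≤ 4 * #(({v | E a v = 1 ∧ E b v = 1} : Finset (Fin n)) \ {z, a, b}) + 12 := by
  set P : Finset (Fin n) := {v | E a v = 1 ∧ E b v = 1}
  have hcard : 4 * (#P : ℝ) = n := by simpa [P, Ne.symm hba] using hE.card_common_ones hz haz hbz
  have hle : (#P : ℝ) ≤ #(P \ {z, a, b}) + 3 := by
    exact_mod_cast Finset.card_le_card_sdiff_add_card.trans (by gcongr; exact Finset.card_le_three)
  linarith

theorem exists_clique_of_row_eq_one (hE : IsGraphHadamard E) (hn : 48 ≤ n) {z : Fin n}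
    (hz : ∀ v, E z v = 1) :
    ∃ S : Finset (Fin n), #S = 5 ∧ ∀ i ∈ S, ∀ j ∈ S, E i j = 1 := by
  obtain ⟨a, b, haz, hbz, hba, hab⟩ := hE.exists_ne_eq_one (by omega) hz
  set T : Finset (Fin n) := ({v | E a v = 1 ∧ E b v = 1} : Finset (Fin n)) \ {z, a, b}
  have hT := hE.le_card_common_ones_sdiff hz haz hbz hba
  obtain ⟨c, hc, d, hd, hcd, hEcd⟩ : ∃ c ∈ T, ∃ d ∈ T, c ≠ d ∧ E c d = 1 := by
    by_contra! h
    have hTle := hE.card_le_of_pairwise_eq_neg_one (by omega) fun c hc d hd hcd =>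
      (hE.entry c d).resolve_left (h c hc d hd hcd)
    -- `n ≤ 4 (2 + √n) + 12` fails exactly when `n ≥ 48`
    have hn' : (48 : ℝ) ≤ n := by exact_mod_cast hn
    nlinarith [Real.sq_sqrt (Nat.cast_nonneg (α := ℝ) n), Real.sqrt_nonneg (n : ℝ)]
  simp only [T, Finset.mem_sdiff, Finset.mem_filter, Finset.mem_univ, true_and,
    Finset.mem_insert, Finset.mem_singleton, not_or] at hc hd
  obtain ⟨⟨hac, hbc⟩, hcz, hca, hcb⟩ := hc
  obtain ⟨⟨had, hbd⟩, hdz, hda, hdb⟩ := hd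
  refine ⟨{z, a, b, c, d}, ?_, fun i hi j hj => ?_⟩
  · rw [Finset.card_insert_of_notMem
        (by simp [Ne.symm haz, Ne.symm hbz, Ne.symm hcz, Ne.symm hdz]),
      Finset.card_insert_of_notMem (by simp [Ne.symm hba, Ne.symm hca, Ne.symm hda]),
      Finset.card_insert_of_notMem (by simp [Ne.symm hcb, Ne.symm hdb]),
      Finset.card_insert_of_notMem (by simpa using hcd), Finset.card_singleton]
  · simp only [Finset.mem_insert, Finset.mem_singleton] at hi hj
    rcases hi with rfl | rfl | rfl | rfl | rfl <;> rcases hj with rfl | rfl | rfl | rfl | rfl <;>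
      first
        | exact hE.diag _
        | exact hz _
        | assumption
        | (rw [hE.apply_comm]; first | exact hz _ | assumption)

theorem exists_sign_pattern {H : Matrix (Fin n) (Fin n) ℝ} (hH : IsGraphHadamard H)
    (hn : 48 ≤ n) : ∃ (S : Finset (Fin n)) (ε : Fin n → ℝ), #S = 5 ∧
      (∀ i, ε i = 1 ∨ ε i = -1) ∧ ∀ i ∈ S, ∀ j ∈ S, H i j = ε i * ε j := by
  let z : Fin n := ⟨0, by omega⟩
  have hε : ∀ i, H z i = 1 ∨ H z i = -1 := hH.entry z
  have hE := hH.switch hε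
  have happly :
      ∀ i j, (diagonal (H z) * H * diagonal (H z)) i j = H z i * H i j * H z j := by
    simp [mul_diagonal, diagonal_mul]
  obtain ⟨S, hS, hclique⟩ := hE.exists_clique_of_row_eq_one hn (z := z) fun v => by
    rw [happly, hH.diag]
    rcases hε v with h | h <;> norm_num [h]
  refine ⟨S, H z, hS, hε, fun i hi j hj => ?_⟩
  have := hclique i hi j hj
  rw [happly] at this
  rcases hε i with h1 | h1 <;> rcases hε j with h2 | h2 <;> rw [h1, h2] at this ⊢ <;> linarith

end IsGraphHadamard

theorem statement18_general (n : ℕ) (hn : 48 ≤ n)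
    (H : Matrix (Fin n) (Fin n) ℝ) (hsym : Hᵀ = H)
    (hent : ∀ i j, H i j = 1 ∨ H i j = -1) (hdiag : ∀ i, H i i = 1)
    (hHad : H * H = (n : ℝ) • (1 : Matrix (Fin n) (Fin n) ℝ))
    (k : ℕ)
    (F : TwoUniformFrame n k) (hQ : F.Q = H - 1) :
    HasInducedCompleteBipartite (frameGraph F) 5 ∧
    ∀ m : ℕ, 1 ≤ m → m ≤ 5 →
      errInf F.V m = (k : ℝ) / n + ((m : ℝ) - 1) * c n k := by
  obtain ⟨S, ε, hS, hε, hpat⟩ :=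
    IsGraphHadamard.exists_sign_pattern ⟨hsym, hent, hdiag, hHad⟩ hn
  have hQpat : ∀ i ∈ S, ∀ j ∈ S, i ≠ j → F.Q i j = ε i * ε j := by
    intro i hi j hj hij
    rw [hQ, Matrix.sub_apply, one_apply_ne hij, sub_zero, hpat i hi j hj]
  refine ⟨⟨S, hS, F.isCompleteBipartite_induce hε hQpat⟩, fun m hm1 hm5 => ?_⟩
  obtain ⟨S', hS'S, hS'⟩ := Finset.exists_subset_card_eq (hS ▸ hm5 : m ≤ #S)
  exact F.errInf_eq hm1 hS' hε fun i hi j hj => hQpat i (hS'S hi) j (hS'S hj)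

theorem statement18 (n : ℕ) (hn : 48 ≤ n)
    (H : Matrix (Fin n) (Fin n) ℝ) (hsym : Hᵀ = H)
    (hent : ∀ i j, H i j = 1 ∨ H i j = -1) (hdiag : ∀ i, H i i = 1)
    (hHad : H * H = (n : ℝ) • (1 : Matrix (Fin n) (Fin n) ℝ))
    (k : ℕ) (hk : (k : ℝ) = ((n : ℝ) + Real.sqrt n) / 2)
    (F : TwoUniformFrame n k) (hQ : F.Q = H - 1) :
    HasInducedCompleteBipartite (frameGraph F) 5 ∧
    ∀ m : ℕ, 1 ≤ m → m ≤ 5 →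
      errInf F.V m = (k : ℝ) / n + ((m : ℝ) - 1) * c n k :=
  statement18_general n hn H hsym hent hdiag hHad k F hQ

end FramesErasures
end
end
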